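/- arXiv:2204.06920 — 2 statements merged into one kernel-verified Lean document; each statement's English description precedes it below -/
import Mathlib

section
/- Let W : ℝ → ℝ be a C¹ function with W(0) ∈ (0, 1] satisfying, for some continuous function q : ℝ → ℝ with 0 ≤ q(x) ≤ 1 and constants a > 0, W'(x) = W(x)(1 + a·q(x) − (1 + a) W(x)) for all x ∈ ℝ. Then 0 < W(x) ≤ 1 for all x ∈ ℝ. -/
theorem stmt_8 (W q : ℝ → ℝ) (a : ℝ) (ha : 0 < a)
    (hW : ContDiff ℝ 1 W) (hW0 : W 0 ∈ Set.Ioc (0:ℝ) 1)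
    (hq : Continuous q) (hqb : ∀ x, 0 ≤ q x ∧ q x ≤ 1)
    (hode : ∀ x, deriv W x = W x * (1 + a * q x - (1 + a) * W x)) :
    ∀ x, 0 < W x ∧ W x ≤ 1 := by
  obtain ⟨hW0pos, hW0le⟩ := hW0
  have hWc : Continuous W := hW.continuous
  have hWd : Differentiable ℝ W := hW.differentiable one_ne_zero
  set f : ℝ → ℝ := fun x => 1 + a * q x - (1 + a) * W x with hfdef
  have hfc : Continuous f := by
    exact ((continuous_const.add (continuous_const.mul hq)).sub
      (continuous_const.mul hWc))
  set F : ℝ → ℝ := fun y => ∫ t in (0:ℝ)..y, f t with hFdef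
  have hF : ∀ x, HasDerivAt F (f x) x := fun x =>
    intervalIntegral.integral_hasDerivAt_right (hfc.intervalIntegrable _ _)
      (hfc.stronglyMeasurableAtFilter _ _) hfc.continuousAt
  have hWode : ∀ x, HasDerivAt W (W x * f x) x := by
    intro x
    have h := (hWd x).hasDerivAt
    rwa [hode x] at h
  -- Step 1: W x = W 0 * exp (F x), hence W > 0 everywhere
  have hG : ∀ x, HasDerivAt (fun y => W y * Real.exp (-F y)) 0 x := by
    intro x
    have h1 : HasDerivAt (fun y => Real.exp (-F y)) (Real.exp (-F x) * (-f x)) x :=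
      ((hF x).neg).exp
    have h2 := (hWode x).mul h1
    refine h2.congr_deriv ?_
    ring
  have hconst : ∀ x, W x * Real.exp (-F x) = W 0 := by
    intro x
    have hd : Differentiable ℝ (fun y => W y * Real.exp (-F y)) :=
      fun y => (hG y).differentiableAt
    have := is_const_of_deriv_eq_zero hd (fun y => (hG y).deriv) x 0
    simpa [hFdef, intervalIntegral.integral_same] using this
  have hWpos : ∀ x, 0 < W x := by
    intro x
    have h := hconst x
    have hepos : 0 < Real.exp (-F x) := Real.exp_pos _
    nlinarith [Real.exp_pos (-F x)]
  -- Step 2: upper bound via g x = (1 / W x - 1) * exp (C x)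
  set c : ℝ → ℝ := fun x => 1 + a * q x with hcdef
  have hcc : Continuous c := continuous_const.add (continuous_const.mul hq)
  set C : ℝ → ℝ := fun y => ∫ t in (0:ℝ)..y, c t with hCdef
  have hC : ∀ x, HasDerivAt C (c x) x := fun x =>
    intervalIntegral.integral_hasDerivAt_right (hcc.intervalIntegrable _ _)
      (hcc.stronglyMeasurableAtFilter _ _) hcc.continuousAt
  set g : ℝ → ℝ := fun y => (1 / W y - 1) * Real.exp (C y) with hgdef
  have hg : ∀ x, HasDerivAt g (a * (1 - q x) * Real.exp (C x)) x := by
    intro x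
    have hWx := (hWpos x).ne'
    have h1 : HasDerivAt (fun y => 1 / W y - 1)
        (-(W x * f x) / (W x) ^ 2) x := by
      simpa using ((hasDerivAt_const x (1:ℝ)).div (hWode x) hWx).sub_const 1
    have h2 : HasDerivAt (fun y => Real.exp (C y)) (Real.exp (C x) * c x) x :=
      (hC x).exp
    have h3 := h1.mul h2
    refine h3.congr_deriv ?_
    have : -(W x * f x) / (W x) ^ 2 = -(f x) / W x := by
      field_simp
    rw [this]
    field_simp [hfdef, hcdef]
    ring
  have hgmono : Monotone g := by
    apply monotone_of_deriv_nonneg (fun y => (hg y).differentiableAt)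
    intro x
    rw [(hg x).deriv]
    have h1 : 0 ≤ 1 - q x := by linarith [(hqb x).2]
    exact mul_nonneg (mul_nonneg ha.le h1) (Real.exp_pos _).le
  -- C y ≤ y for y ≤ 0
  have hCle : ∀ y : ℝ, y ≤ 0 → C y ≤ y := by
    intro y hy
    have h1 : (∫ t in y..(0:ℝ), (1:ℝ)) ≤ ∫ t in y..(0:ℝ), c t := by
      apply intervalIntegral.integral_mono_on hy
        (intervalIntegrable_const) (hcc.intervalIntegrable _ _)
      intro t _
      show (1:ℝ) ≤ c t
      simp only [hcdef]
      nlinarith [(hqb t).1]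
    have h2 : C y = -∫ t in y..(0:ℝ), c t := by
      rw [hCdef]
      simp [intervalIntegral.integral_symm y 0]
    rw [h2]
    simp at h1
    linarith
  intro x
  refine ⟨hWpos x, ?_⟩
  by_contra hx
  push_neg at hx
  have hgx : g x < 0 := by
    have h1 : 1 / W x - 1 < 0 := by
      have := hWpos x
      rw [sub_neg, div_lt_one this]
      exact hx
    exact mul_neg_of_neg_of_pos h1 (Real.exp_pos _)
  rcases le_or_gt 0 x with hx0 | hx0
  · -- forward: g 0 ≤ g x < 0, but g 0 ≥ 0
    have h0 : 0 ≤ g 0 := by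
      have hC0 : C 0 = 0 := by simp [hCdef]
      have h1 : 1 ≤ 1 / W 0 := one_le_one_div hW0pos hW0le
      simp only [hgdef]
      exact mul_nonneg (by linarith) (Real.exp_pos _).le
    have := hgmono hx0
    linarith
  · -- backward: pick y far to the left
    set B := g x with hB
    set y : ℝ := min x (-(Real.log (2 / (-B)))) with hy
    have hyx : y ≤ x := min_le_left _ _
    have hy0 : y ≤ 0 := le_trans hyx hx0.le
    have hBneg : B < 0 := hgx
    have hexp : 2 / (-B) ≤ Real.exp (-y) := by
      have h1 : -y ≥ Real.log (2 / (-B)) := by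
        have := min_le_right x (-(Real.log (2 / (-B))))
        linarith [hy ▸ this]
      calc 2 / (-B) = Real.exp (Real.log (2 / (-B))) := by
            rw [Real.exp_log (div_pos two_pos (by linarith))]
        _ ≤ Real.exp (-y) := Real.exp_le_exp.mpr h1
    have hCy : C y ≤ y := hCle y hy0
    have hexp2 : Real.exp (-y) ≤ Real.exp (-C y) := Real.exp_le_exp.mpr (by linarith)
    have hgy : g y ≤ B := hgmono hyx
    -- 1 / W y - 1 = g y * exp (-C y) ≤ B * exp (-C y) ≤ B * exp(-y) ≤ -2
    have hval : 1 / W y - 1 = g y * Real.exp (-(C y)) := by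
      simp only [hgdef]
      rw [mul_assoc, ← Real.exp_add]
      simp
    have h1 : g y * Real.exp (-(C y)) ≤ B * Real.exp (-(C y)) := by
      have := Real.exp_pos (-(C y))
      nlinarith
    have h2 : B * Real.exp (-(C y)) ≤ B * Real.exp (-y) := by
      nlinarith [Real.exp_pos (-y)]
    have h3 : B * Real.exp (-y) ≤ -2 := by
      have h4 : Real.exp (-y) ≥ 2 / (-B) := hexp
      have h5 : 0 < -B := by linarith
      calc B * Real.exp (-y) ≤ B * (2 / (-B)) := by nlinarith
        _ = -2 := by field_simp [hBneg.ne]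
    have h6 : 1 / W y - 1 ≤ -2 := by rw [hval]; linarith
    have h7 : 0 < 1 / W y := one_div_pos.mpr (hWpos y)
    linarith
end

section
/- Let c, χ, σ > 0, and let P₁, P₂ : ℝ → ℝ be C¹ with 0 ≤ Pᵢ(x) ≤ 1 and 0 ≤ Pᵢ'(x) ≤ c/(2χ) for all x. Define λᵢ(x) = (1 + (χ/σ²)Pᵢ(x))/(c − χ Pᵢ'(x)). Then for all x ∈ ℝ, |λ₂(x) − λ₁(x)| ≤ (4χ/(cσ²) + 4χ²/(c²σ²)·|P₁'(x)|)|P₂(x) − P₁(x)| + (4χ/c² + 4χ²/(c²σ²)·P₁(x))|P₂'(x) − P₁'(x)|. -/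
theorem stmt_14 (c χ σ : ℝ) (hc : 0 < c) (hχ : 0 < χ) (hσ : 0 < σ)
    (P₁ P₂ : ℝ → ℝ) (hP₁ : ContDiff ℝ 1 P₁) (hP₂ : ContDiff ℝ 1 P₂)
    (hP₁b : ∀ x, 0 ≤ P₁ x ∧ P₁ x ≤ 1) (hP₂b : ∀ x, 0 ≤ P₂ x ∧ P₂ x ≤ 1)
    (hP₁' : ∀ x, 0 ≤ deriv P₁ x ∧ deriv P₁ x ≤ c / (2 * χ))
    (hP₂' : ∀ x, 0 ≤ deriv P₂ x ∧ deriv P₂ x ≤ c / (2 * χ))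
    (lam₁ lam₂ : ℝ → ℝ)
    (hlam₁ : ∀ x, lam₁ x = (1 + (χ / σ ^ 2) * P₁ x) / (c - χ * deriv P₁ x))
    (hlam₂ : ∀ x, lam₂ x = (1 + (χ / σ ^ 2) * P₂ x) / (c - χ * deriv P₂ x)) :
    ∀ x, |lam₂ x - lam₁ x| ≤
      (4 * χ / (c * σ ^ 2) + 4 * χ ^ 2 / (c ^ 2 * σ ^ 2) * |deriv P₁ x|) * |P₂ x - P₁ x|
      + (4 * χ / c ^ 2 + 4 * χ ^ 2 / (c ^ 2 * σ ^ 2) * P₁ x) * |deriv P₂ x - deriv P₁ x| := by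
  intro x
  rw [hlam₁, hlam₂]
  obtain ⟨ha0, ha1⟩ := hP₁b x
  obtain ⟨hb0, hb1⟩ := hP₂b x
  obtain ⟨hp0, hp1⟩ := hP₁' x
  obtain ⟨hq0, hq1⟩ := hP₂' x
  set a := P₁ x
  set b := P₂ x
  set p := deriv P₁ x
  set q := deriv P₂ x
  have hσ2 : (0:ℝ) < σ ^ 2 := by positivity
  have hχp : χ * p ≤ c / 2 := by
    have h := mul_le_mul_of_nonneg_left hp1 hχ.le
    have h2 : χ * (c / (2 * χ)) = c / 2 := by field_simp
    linarith [h2 ▸ h]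
  have hχq : χ * q ≤ c / 2 := by
    have h := mul_le_mul_of_nonneg_left hq1 hχ.le
    have h2 : χ * (c / (2 * χ)) = c / 2 := by field_simp
    linarith [h2 ▸ h]
  have hD₁ : c / 2 ≤ c - χ * p := by linarith
  have hD₂ : c / 2 ≤ c - χ * q := by linarith
  have hD₁pos : 0 < c - χ * p := by linarith
  have hD₂pos : 0 < c - χ * q := by linarith
  have key : (1 + χ / σ ^ 2 * b) / (c - χ * q) - (1 + χ / σ ^ 2 * a) / (c - χ * p)
      = ((χ / σ ^ 2 * c - χ / σ ^ 2 * (χ * p)) * (b - a)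
          + χ * (1 + χ / σ ^ 2 * a) * (q - p)) / ((c - χ * q) * (c - χ * p)) := by
    field_simp
    ring
  rw [key, abs_div, abs_of_pos (mul_pos hD₂pos hD₁pos)]
  have hNbound : |(χ / σ ^ 2 * c - χ / σ ^ 2 * (χ * p)) * (b - a)
        + χ * (1 + χ / σ ^ 2 * a) * (q - p)|
      ≤ (χ / σ ^ 2 * c + χ / σ ^ 2 * χ * |p|) * |b - a|
        + χ * (1 + χ / σ ^ 2 * a) * |q - p| := by
    calc _ ≤ |(χ / σ ^ 2 * c - χ / σ ^ 2 * (χ * p)) * (b - a)|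
            + |χ * (1 + χ / σ ^ 2 * a) * (q - p)| := abs_add_le _ _
    _ ≤ (χ / σ ^ 2 * c + χ / σ ^ 2 * χ * |p|) * |b - a|
        + χ * (1 + χ / σ ^ 2 * a) * |q - p| := by
        rw [abs_mul, abs_mul]
        gcongr
        · calc |χ / σ ^ 2 * c - χ / σ ^ 2 * (χ * p)|
              ≤ |χ / σ ^ 2 * c| + |χ / σ ^ 2 * (χ * p)| := abs_sub _ _
          _ = χ / σ ^ 2 * c + χ / σ ^ 2 * χ * |p| := by
              rw [abs_mul, abs_mul, abs_mul, abs_of_nonneg (by positivity : (0:ℝ) ≤ χ / σ ^ 2),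
                abs_of_pos hc, abs_of_pos hχ]
              ring
        · rw [abs_of_nonneg (by positivity)]
  have hDD : c ^ 2 / 4 ≤ (c - χ * q) * (c - χ * p) := by nlinarith
  calc |(χ / σ ^ 2 * c - χ / σ ^ 2 * (χ * p)) * (b - a)
        + χ * (1 + χ / σ ^ 2 * a) * (q - p)| / ((c - χ * q) * (c - χ * p))
      ≤ ((χ / σ ^ 2 * c + χ / σ ^ 2 * χ * |p|) * |b - a|
        + χ * (1 + χ / σ ^ 2 * a) * |q - p|) / (c ^ 2 / 4) := by
        apply div_le_div₀ _ hNbound (by positivity) hDD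
        positivity
  _ = (4 * χ / (c * σ ^ 2) + 4 * χ ^ 2 / (c ^ 2 * σ ^ 2) * |p|) * |b - a|
      + (4 * χ / c ^ 2 + 4 * χ ^ 2 / (c ^ 2 * σ ^ 2) * a) * |q - p| := by
      field_simp
end
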